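/- arXiv:1705.07566 — 3 statements merged into one kernel-verified Lean document; each statement's English description precedes it below -/
import Mathlib

section
/- Let X be a finite connected graph, all of whose vertices have finite degree. The random-walk coefficients P_{i,j}^k = (1/|Γ_i(v_0)|) Σ_{v∈Γ_i(v_0)} |Γ_j(v) ∩ Γ_k(v_0)|/|Γ_j(v)| are well-defined for all i,j,k and all base points v_0 if and only if X is self-centered, i.e., every vertex has eccentricity equal to the radius of X. -/
open scoped BigOperators

variable {V : Type*}

/-- The sphere of radius `i` around `v`: vertices at graph distance exactly `i`. -/
def SimpleGraph.gsphere (G : SimpleGraph V) (v : V) (i : ℕ) : Set V :=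
  {w : V | G.dist v w = i}

/-- The random-walk coefficient
`P_{i,j}^k = (1/|Γ_i(v₀)|) Σ_{v ∈ Γ_i(v₀)} |Γ_j(v) ∩ Γ_k(v₀)| / |Γ_j(v)|`. -/
noncomputable def SimpleGraph.rwCoeff (G : SimpleGraph V) (v₀ : V) (i j k : ℕ) : ℝ :=
  (1 / ((G.gsphere v₀ i).ncard : ℝ)) *
    ∑ᶠ v ∈ G.gsphere v₀ i,
      (((G.gsphere v j ∩ G.gsphere v₀ k).ncard : ℝ) / ((G.gsphere v j).ncard : ℝ))

/-- The eccentricity of a vertex: the supremum of distances to other vertices. -/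
noncomputable def SimpleGraph.eccent' (G : SimpleGraph V) (v : V) : ℕ :=
  ⨆ w : V, G.dist v w

/-- The self-centered condition: the graph is either infinite, or finite with all
eccentricities equal (i.e. equal to the radius). -/
def SimpleGraph.SelfCenteredCond (G : SimpleGraph V) : Prop :=
  Infinite V ∨ (Finite V ∧ ∀ v w : V, G.eccent' v = G.eccent' w)


lemma exists_dist_eq_of_le (G : SimpleGraph V) (hc : G.Connected) (v : V) :
    ∀ d w, G.dist v w = d → ∀ j ≤ d, ∃ u, G.dist v u = j := by
  intro d
  induction d with
  | zero => intro w _ j hj; exact ⟨v, by simp [Nat.le_zero.mp hj]⟩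
  | succ d ih =>
    intro w hw j hj
    rcases Nat.lt_or_ge j (d+1) with h | h
    · have hne : G.dist v w ≠ 0 := by omega
      obtain ⟨p, hp⟩ := SimpleGraph.exists_walk_of_dist_ne_zero hne
      have hq : ¬ p.reverse.Nil := by
        rw [SimpleGraph.Walk.nil_iff_length_eq, SimpleGraph.Walk.length_reverse]
        omega
      set w' := p.reverse.getVert 1 with hw'
      have hadj : G.Adj w w' := p.reverse.adj_snd hq
      have h1 : G.dist w' v ≤ d := by
        have hlen : p.reverse.tail.length + 1 = p.reverse.length :=
          SimpleGraph.Walk.length_tail_add_one hq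
        rw [SimpleGraph.Walk.length_reverse, hp, hw] at hlen
        exact (SimpleGraph.dist_le p.reverse.tail).trans (by omega)
      have h2 : d ≤ G.dist v w' := by
        have ht := hc.dist_triangle (u := v) (v := w') (w := w)
        have : G.dist w' w = 1 := SimpleGraph.dist_eq_one_iff_adj.mpr hadj.symm
        omega
      have hdw' : G.dist v w' = d := by
        rw [SimpleGraph.dist_comm] at h1; omega
      exact ih w' hdw' j (by omega)
    · exact ⟨w, by omega⟩

/-- For a finite connected graph, the random-walk coefficients `P_{i,j}^k` are
well-defined for all indices and base points (equivalently, every sphere of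
radius `j ≤ diam X` around every vertex is nonempty) iff the graph is
self-centered, i.e. every eccentricity equals the radius. -/
theorem rwCoeff_wellDefined_iff_selfCentered [Fintype V] (G : SimpleGraph V)
    (hc : G.Connected) :
    (∀ (v : V) (j : ℕ), j ≤ (⨆ u : V, G.eccent' u) →
        (G.gsphere v j).Nonempty) ↔
      (∀ v : V, G.eccent' v = ⨅ u : V, G.eccent' u) := by

  have hne : Nonempty V := hc.nonempty
  have hbdd : ∀ v : V, BddAbove (Set.range fun w => G.dist v w) :=
    fun v => (Set.finite_range _).bddAbove
  have hbddE : BddAbove (Set.range fun u => G.eccent' u) :=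
    (Set.finite_range _).bddAbove
  have hatt : ∀ v : V, ∃ w, G.dist v w = G.eccent' v := fun v =>
    exists_eq_ciSup_of_finite
  have hle_ecc : ∀ v w : V, G.dist v w ≤ G.eccent' v := fun v w =>
    le_ciSup (hbdd v) w
  constructor
  · intro h v
    have key : ∀ v : V, G.eccent' v = ⨆ u : V, G.eccent' u := by
      intro v
      refine le_antisymm (le_ciSup hbddE v) ?_
      obtain ⟨w, hw⟩ := h v (⨆ u : V, G.eccent' u) le_rfl
      calc (⨆ u : V, G.eccent' u) = G.dist v w := hw.symm
        _ ≤ G.eccent' v := hle_ecc v w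
    rw [key v]
    refine le_antisymm ?_ ?_
    · exact le_ciInf fun u => (key u).ge
    · exact (ciInf_le (Set.finite_range _).bddBelow v).trans (key v).le
  · intro h v j hj
    have hecc : G.eccent' v = ⨆ u : V, G.eccent' u := by
      refine le_antisymm (le_ciSup hbddE v) (ciSup_le fun u => ?_)
      rw [h u, ← h v]
    obtain ⟨w, hw⟩ := hatt v
    exact exists_dist_eq_of_le G hc v (G.eccent' v) w hw j (by omega)
end

section
/- Let X be a graph satisfying the self-centered condition, v_0 a base point with all P_{i,j}^k well-defined, and suppose the convolution R_i ∘ R_j = Σ_k P_{i,j}^k R_k satisfies R_i ∘ R_j = R_j ∘ R_i and (R_1 ∘ R_i) ∘ R_j = R_1 ∘ (R_i ∘ R_j) for all i, j. Then the convolution is associative on all basis elements: (R_h ∘ R_i) ∘ R_j = R_h ∘ (R_i ∘ R_j) for all h, i, j. -/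
/-!
Read `P_{i,j}^k` as the structure constants of a bilinear product on finitely supported
sequences, `R_i` being the `i`-th unit vector. The claim is that every `R_h` lies in the left
nucleus `{a | (a x) y = a (x y)}`, which is a subspace closed under the product. It contains
`R_1` by hypothesis and `R_0`, which fixes `R_i` when the sphere of radius `i` about `v₀` is
non-empty and kills it otherwise. By the triangle inequality `R_1 ∘ R_{n+1}` only involves
`R_n`, `R_{n+1}` and `R_{n+2}`, the last with a positive coefficient as soon as that sphere
is non-empty, so `R_{n+2}` lies in the nucleus by induction; if the sphere is empty, `R_{n+2}`
multiplies everything to zero.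
-/

open scoped BigOperators

variable {V : Type*}

namespace LinearMap

variable {R M : Type*} [CommSemiring R] [AddCommMonoid M] [Module R M]

def leftNucleus (μ : M →ₗ[R] M →ₗ[R] M) : Submodule R M where
  carrier := {a | ∀ x y, μ (μ a x) y = μ a (μ x y)}
  zero_mem' := by simp
  add_mem' ha hb x y := by simp [ha x y, hb x y]
  smul_mem' c a ha x y := by simp [ha x y]

variable {μ : M →ₗ[R] M →ₗ[R] M}

theorem mem_leftNucleus_iff_basis {ι : Type*} (b : Module.Basis ι R M) {a : M} :
    a ∈ μ.leftNucleus ↔ ∀ i j, μ (μ a (b i)) (b j) = μ a (μ (b i) (b j)) :=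
  ⟨fun ha _ _ => ha _ _, fun h x y =>
    LinearMap.congr_fun₂ (LinearMap.ext_basis b b (B := μ ∘ₗ μ a) (B' := μ.compr₂ (μ a)) h) x y⟩

theorem apply_mem_leftNucleus {a b : M} (ha : a ∈ μ.leftNucleus) (hb : b ∈ μ.leftNucleus) :
    μ a b ∈ μ.leftNucleus := fun x y => by
  rw [ha, ha, hb, ha]

end LinearMap

namespace Finsupp

open LinearMap

section StructureConstants

variable {R ι : Type*} [CommSemiring R] (P : ι → ι → ι → R)
  (hP : ∀ i j, (Function.support (P i j)).Finite)

/-- The bilinear extension of `single i 1 * single j 1 = ∑ k, P i j k • single k 1`. -/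
noncomputable def structureMul : (ι →₀ R) →ₗ[R] (ι →₀ R) →ₗ[R] (ι →₀ R) :=
  linearCombination R fun i => linearCombination R fun j => ofSupportFinite (P i j) (hP i j)

theorem structureMul_single_single (i j : ι) :
    structureMul P hP (single i 1) (single j 1) = ofSupportFinite (P i j) (hP i j) := by
  simp [structureMul]

theorem structureMul_single_right_apply (x : ι →₀ R) (j k : ι) :
    structureMul P hP x (single j 1) k = ∑ᶠ l, x l * P l j k := by
  rw [finsum_eq_sum_of_support_subset _ (s := x.support) fun l hl => by
    simpa using left_ne_zero_of_mul hl, structureMul, linearCombination_apply (l := x),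
    Finsupp.sum]
  simp [LinearMap.sum_apply, linearCombination_single, ofSupportFinite_coe]

theorem structureMul_single_left_apply (x : ι →₀ R) (h k : ι) :
    structureMul P hP (single h 1) x k = ∑ᶠ l, x l * P h l k := by
  rw [finsum_eq_sum_of_support_subset _ (s := x.support) fun l hl => by
    simpa using left_ne_zero_of_mul hl, structureMul, linearCombination_single, one_smul,
    linearCombination_apply (l := x), Finsupp.sum]
  simp [ofSupportFinite_coe]

theorem single_mem_leftNucleus_structureMul_iff (h : ι) :
    single h 1 ∈ (structureMul P hP).leftNucleus ↔
      ∀ i j k, ∑ᶠ l, P h i l * P l j k = ∑ᶠ l, P i j l * P h l k := by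
  simp only [mem_leftNucleus_iff_basis Finsupp.basisSingleOne, coe_basisSingleOne,
    Finsupp.ext_iff, structureMul_single_single, structureMul_single_right_apply,
    structureMul_single_left_apply, ofSupportFinite_coe]

theorem single_mem_leftNucleus_structureMul_of_forall_eq_zero {h : ι}
    (hzero : ∀ j k, P h j k = 0) : single h 1 ∈ (structureMul P hP).leftNucleus := by
  rw [single_mem_leftNucleus_structureMul_iff]
  simp [hzero]

end StructureConstants

theorem single_add_two_mem_leftNucleus_structureMul {K : Type*} [Field K]
    {P : ℕ → ℕ → ℕ → K} (hP : ∀ i j, (Function.support (P i j)).Finite) {n : ℕ}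
    (hsupp : ∀ k, P 1 (n + 1) k ≠ 0 → k = n ∨ k = n + 1 ∨ k = n + 2)
    (hne : P 1 (n + 1) (n + 2) ≠ 0) (h₁ : single 1 1 ∈ (structureMul P hP).leftNucleus)
    (hn : single n 1 ∈ (structureMul P hP).leftNucleus)
    (hn₁ : single (n + 1) 1 ∈ (structureMul P hP).leftNucleus) :
    single (n + 2) 1 ∈ (structureMul P hP).leftNucleus := by
  have hexpand : structureMul P hP (single 1 1) (single (n + 1) 1) =
      P 1 (n + 1) n • single n 1 + P 1 (n + 1) (n + 1) • single (n + 1) 1 +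
        P 1 (n + 1) (n + 2) • single (n + 2) 1 := by
    ext k
    rw [structureMul_single_single, ofSupportFinite_coe]
    by_cases hk : P 1 (n + 1) k = 0
    · simp only [coe_add, coe_smul, Pi.add_apply, Pi.smul_apply, single_apply, smul_eq_mul]
      split_ifs <;> simp_all
    · rcases hsupp k hk with rfl | rfl | rfl <;> simp
  have hrec : P 1 (n + 1) (n + 2) • single (n + 2) 1 =
      structureMul P hP (single 1 1) (single (n + 1) 1) -
        (P 1 (n + 1) n • single n 1 + P 1 (n + 1) (n + 1) • single (n + 1) 1) := by
    rw [hexpand, add_sub_cancel_left]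
  rw [← Submodule.smul_mem_iff _ hne, hrec]
  exact Submodule.sub_mem _ (apply_mem_leftNucleus h₁ hn₁)
    (Submodule.add_mem _ (Submodule.smul_mem _ _ hn) (Submodule.smul_mem _ _ hn₁))

end Finsupp

namespace SimpleGraph

variable {G : SimpleGraph V}

@[simp]
theorem mem_gsphere {v w : V} {i : ℕ} : w ∈ G.gsphere v i ↔ G.dist v w = i := Iff.rfl

theorem Connected.exists_adj_dist_eq_of_dist_eq_succ (hc : G.Connected) {v w : V} {n : ℕ}
    (h : G.dist v w = n + 1) : ∃ u, G.Adj v u ∧ G.dist u w = n := by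
  obtain ⟨p, hp⟩ := hc.exists_walk_length_eq_dist v w
  cases p with
  | nil => simp_all
  | @cons _ u _ hadj q =>
    refine ⟨u, hadj, le_antisymm ?_ ?_⟩
    · simpa [h] using (G.dist_le q).trans_eq (by simpa [h] using hp)
    · have := hc.dist_triangle (u := v) (v := u) (w := w)
      rw [h, (dist_eq_one_iff_adj).2 hadj] at this
      omega

theorem Connected.finite_setOf_dist_le (hc : G.Connected)
    (hlf : ∀ v : V, (G.neighborSet v).Finite) (v : V) (n : ℕ) :
    {w : V | G.dist v w ≤ n}.Finite := by
  induction n with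
  | zero => simp [hc.dist_eq_zero_iff]
  | succ n ih =>
    refine (ih.union (ih.biUnion fun u _ => hlf u)).subset fun w hw => ?_
    rcases (Nat.le_succ_iff.1 hw) with hle | heq
    · exact Or.inl hle
    · rw [dist_comm] at heq
      obtain ⟨u, hadj, hu⟩ := hc.exists_adj_dist_eq_of_dist_eq_succ heq
      exact Or.inr (Set.mem_biUnion (x := u) (dist_comm.trans hu).le hadj.symm)

theorem Connected.gsphere_finite (hc : G.Connected) (hlf : ∀ v : V, (G.neighborSet v).Finite)
    (v : V) (i : ℕ) : (G.gsphere v i).Finite :=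
  (hc.finite_setOf_dist_le hlf v i).subset fun _ hw => (mem_gsphere.1 hw).le

theorem Connected.gsphere_zero (hc : G.Connected) (v : V) : G.gsphere v 0 = {v} := by
  ext w
  simp [hc.dist_eq_zero_iff, eq_comm]

variable (v₀ : V) {i j k : ℕ}

theorem rwCoeff_eq_zero_of_forall_inter_eq_empty
    (h : ∀ v ∈ G.gsphere v₀ i, G.gsphere v j ∩ G.gsphere v₀ k = ∅) :
    G.rwCoeff v₀ i j k = 0 := by
  rw [rwCoeff, finsum_mem_of_eqOn_zero fun v hv => by simp [h v hv], mul_zero]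

theorem rwCoeff_eq_zero_of_gsphere_left_eq_empty (h : G.gsphere v₀ i = ∅) :
    G.rwCoeff v₀ i j k = 0 :=
  rwCoeff_eq_zero_of_forall_inter_eq_empty v₀ (by simp [h])

theorem rwCoeff_eq_zero_of_gsphere_right_eq_empty (h : G.gsphere v₀ k = ∅) :
    G.rwCoeff v₀ i j k = 0 :=
  rwCoeff_eq_zero_of_forall_inter_eq_empty v₀ (by simp [h])

theorem Connected.le_add_of_rwCoeff_ne_zero (hc : G.Connected) (h : G.rwCoeff v₀ i j k ≠ 0) :
    k ≤ i + j ∧ j ≤ i + k := by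
  by_contra hlt
  refine h (rwCoeff_eq_zero_of_forall_inter_eq_empty v₀ fun v hv => ?_)
  ext w
  simp only [Set.mem_inter_iff, mem_gsphere, Set.mem_empty_iff_false, iff_false, not_and]
  intro hj hk
  have := hc.dist_triangle (u := v₀) (v := v) (w := w)
  have := hc.dist_triangle (u := v) (v := v₀) (w := w)
  rw [dist_comm (u := v) (v := v₀)] at this
  simp only [mem_gsphere] at hv
  omega

theorem Connected.rwCoeff_support_finite (hc : G.Connected) (i j : ℕ) :
    (Function.support (G.rwCoeff v₀ i j)).Finite :=
  (Set.finite_Iic (i + j)).subset fun _ hk => (hc.le_add_of_rwCoeff_ne_zero v₀ hk).1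

theorem Connected.rwCoeff_zero_left_of_ne (hc : G.Connected) (h : j ≠ k) :
    G.rwCoeff v₀ 0 j k = 0 :=
  rwCoeff_eq_zero_of_forall_inter_eq_empty v₀ fun v hv => by
    rw [hc.gsphere_zero, Set.mem_singleton_iff] at hv
    subst hv
    ext w
    simp only [Set.mem_inter_iff, mem_gsphere, Set.mem_empty_iff_false, iff_false, not_and]
    omega

theorem Connected.rwCoeff_zero_left_self (hc : G.Connected)
    (hlf : ∀ v : V, (G.neighborSet v).Finite) (hne : (G.gsphere v₀ j).Nonempty) :
    G.rwCoeff v₀ 0 j j = 1 := by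
  have hpos : 0 < (G.gsphere v₀ j).ncard := (Set.ncard_pos (hc.gsphere_finite hlf v₀ j)).2 hne
  rw [rwCoeff, hc.gsphere_zero, finsum_mem_singleton, Set.inter_self, Set.ncard_singleton,
    Nat.cast_one, div_one, one_mul, div_self (Nat.cast_ne_zero.2 hpos.ne')]

theorem Connected.rwCoeff_zero_assoc (hc : G.Connected)
    (hlf : ∀ v : V, (G.neighborSet v).Finite) (i j k : ℕ) :
    ∑ᶠ l, G.rwCoeff v₀ 0 i l * G.rwCoeff v₀ l j k =
      ∑ᶠ l, G.rwCoeff v₀ i j l * G.rwCoeff v₀ 0 l k := by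
  rw [finsum_eq_single _ i fun l hl => by rw [hc.rwCoeff_zero_left_of_ne v₀ (Ne.symm hl), zero_mul],
    finsum_eq_single _ k fun l hl => by rw [hc.rwCoeff_zero_left_of_ne v₀ hl, mul_zero]]
  rcases (G.gsphere v₀ i).eq_empty_or_nonempty with hi | hi
  · simp [rwCoeff_eq_zero_of_gsphere_left_eq_empty v₀ hi]
  rcases (G.gsphere v₀ k).eq_empty_or_nonempty with hk | hk
  · simp [rwCoeff_eq_zero_of_gsphere_right_eq_empty v₀ hk]
  rw [hc.rwCoeff_zero_left_self v₀ hlf hi, hc.rwCoeff_zero_left_self v₀ hlf hk, one_mul, mul_one]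

theorem Connected.rwCoeff_one_pos (hc : G.Connected) (hlf : ∀ v : V, (G.neighborSet v).Finite)
    {m : ℕ} (hne : (G.gsphere v₀ (m + 1)).Nonempty) : 0 < G.rwCoeff v₀ 1 m (m + 1) := by
  obtain ⟨w, hw⟩ := hne
  obtain ⟨v, hadj, hvw⟩ := hc.exists_adj_dist_eq_of_dist_eq_succ (mem_gsphere.1 hw)
  have hv : v ∈ G.gsphere v₀ 1 := dist_eq_one_iff_adj.2 hadj
  have hfin₁ := hc.gsphere_finite hlf v₀ 1
  have hfin := hc.gsphere_finite hlf v m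
  have hterm : 0 < ((G.gsphere v m ∩ G.gsphere v₀ (m + 1)).ncard : ℝ) / (G.gsphere v m).ncard := by
    refine div_pos ?_ ?_ <;> norm_cast
    · exact (Set.ncard_pos (hfin.inter_of_left _)).2 ⟨w, hvw, hw⟩
    · exact (Set.ncard_pos hfin).2 ⟨w, hvw⟩
  rw [rwCoeff, finsum_mem_eq_finite_toFinset_sum _ hfin₁]
  refine mul_pos (by simpa using (Set.ncard_pos hfin₁).2 ⟨v, hv⟩) ?_
  exact Finset.sum_pos' (fun _ _ => by positivity) ⟨v, hfin₁.mem_toFinset.2 hv, hterm⟩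

end SimpleGraph

theorem rwCoeff_assoc_of_comm_and_one_general (G : SimpleGraph V) (hc : G.Connected)
    (hlf : ∀ v : V, (G.neighborSet v).Finite)
    (v₀ : V)
    (hone : ∀ i j k : ℕ,
      (∑ᶠ l : ℕ, G.rwCoeff v₀ 1 i l * G.rwCoeff v₀ l j k) =
        ∑ᶠ l : ℕ, G.rwCoeff v₀ i j l * G.rwCoeff v₀ 1 l k) :
    ∀ h i j k : ℕ,
      (∑ᶠ l : ℕ, G.rwCoeff v₀ h i l * G.rwCoeff v₀ l j k) =
        ∑ᶠ l : ℕ, G.rwCoeff v₀ i j l * G.rwCoeff v₀ h l k := by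
  have hfin := hc.rwCoeff_support_finite v₀
  have hmem_iff := Finsupp.single_mem_leftNucleus_structureMul_iff (G.rwCoeff v₀) hfin
  suffices ∀ h, Finsupp.single h 1 ∈ (Finsupp.structureMul (G.rwCoeff v₀) hfin).leftNucleus from
    fun h => (hmem_iff h).1 (this h)
  have h₁ := (hmem_iff 1).2 hone
  intro h
  induction h using Nat.twoStepInduction with
  | zero => exact (hmem_iff 0).2 (hc.rwCoeff_zero_assoc v₀ hlf)
  | one => exact h₁
  | more n hn hn₁ =>
    rcases (G.gsphere v₀ (n + 2)).eq_empty_or_nonempty with hempty | hne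
    · exact Finsupp.single_mem_leftNucleus_structureMul_of_forall_eq_zero _ hfin
        fun _ _ => SimpleGraph.rwCoeff_eq_zero_of_gsphere_left_eq_empty v₀ hempty
    · refine Finsupp.single_add_two_mem_leftNucleus_structureMul hfin (fun k hk => ?_)
        (hc.rwCoeff_one_pos v₀ hlf hne).ne' h₁ hn hn₁
      have := hc.le_add_of_rwCoeff_ne_zero v₀ hk
      omega

/-- If the random-walk convolution on the distance relations of a graph (with
self-centered condition and well-defined coefficients) is commutative and
satisfies `(R_1 ∘ R_i) ∘ R_j = R_1 ∘ (R_i ∘ R_j)` for all `i, j`, then it is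
associative on all basis elements: `(R_h ∘ R_i) ∘ R_j = R_h ∘ (R_i ∘ R_j)`,
expressed on the coefficient of each `R_k`. -/
theorem rwCoeff_assoc_of_comm_and_one (G : SimpleGraph V) (hc : G.Connected)
    (hlf : ∀ v : V, (G.neighborSet v).Finite) (hsc : G.SelfCenteredCond)
    (v₀ : V)
    (hwd : ∀ (v : V) (j : ℕ), (∃ a b : V, G.dist a b = j) →
      (G.gsphere v j).Nonempty)
    (hcomm : ∀ i j k : ℕ, G.rwCoeff v₀ i j k = G.rwCoeff v₀ j i k)
    (hone : ∀ i j k : ℕ,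
      (∑ᶠ l : ℕ, G.rwCoeff v₀ 1 i l * G.rwCoeff v₀ l j k) =
        ∑ᶠ l : ℕ, G.rwCoeff v₀ i j l * G.rwCoeff v₀ 1 l k) :
    ∀ h i j k : ℕ,
      (∑ᶠ l : ℕ, G.rwCoeff v₀ h i l * G.rwCoeff v₀ l j k) =
        ∑ᶠ l : ℕ, G.rwCoeff v₀ i j l * G.rwCoeff v₀ h l k :=
  rwCoeff_assoc_of_comm_and_one_general G hc hlf v₀ hone
end

section
/- The linked-triangle graph X_∞ is distance-regular with intersection array b_0 = 4, b_i = 2 for i ≥ 1, and c_i = 1 for i ≥ 1. Moreover its spheres satisfy |Γ_i(v_0)| = 2^{i+1} for all i ≥ 1 and any vertex v_0. -/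
/-- Vertices of the linked-triangle graph: nonempty finite words over a
three-letter alphabet in which every two consecutive letters differ. -/
def LTVertex : Type :=
  {l : List (Fin 3) // l ≠ [] ∧ l.Chain' (· ≠ ·)}

/-- The linked-triangle graph: two words are adjacent iff one is obtained from
the other by appending one letter, or they have the same length and agree
except in the last letter. -/
def LTGraph : SimpleGraph LTVertex where
  Adj v w := v ≠ w ∧
    ((v.1 <+: w.1 ∧ w.1.length = v.1.length + 1) ∨
     (w.1 <+: v.1 ∧ v.1.length = w.1.length + 1) ∨
     (v.1.length = w.1.length ∧ v.1.dropLast = w.1.dropLast))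
  symm := by
    constructor
    rintro v w ⟨hne, h⟩
    refine ⟨hne.symm, ?_⟩
    rcases h with h | h | ⟨h1, h2⟩
    · exact Or.inr (Or.inl h)
    · exact Or.inl h
    · exact Or.inr (Or.inr ⟨h1.symm, h2.symm⟩)
  loopless := by constructor; rintro v ⟨hne, -⟩; exact hne rfl

/-!
Read a word as the edge from its longest proper prefix to itself in the tree of these words,
rooted at `[]`; this tree is 3-regular and `LTGraph` is its line graph. Its distance is the
explicit `wordDist`: past the longest common prefix of two words, a word extending the other
costs its extra length, and two diverging tails `s`, `t` cost `|s| + |t| + 1`.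

A word `r ++ [y]` has two children `r ++ [y, z]` and two upper neighbours: its parent `r` and
one sibling, or the two other one-letter words when `r = []`. Seen from `v` at distance `i`, the
children lie at distance `i + 1` and the upper neighbours at `i - 1` and `i`, unless `r ++ [y]` is
a proper prefix of `v`, when the two pairs exchange roles. Either way the four distances are
`i - 1, i, i + 1, i + 1`, and double counting the edges between consecutive spheres gives
`|Γ_{i+1}(v)| = 2 |Γ_i(v)|`.
-/

namespace SimpleGraph

variable {V : Type*} (G : SimpleGraph V)

theorem dist_eq_of_lipschitz_of_descent {v : V} {f : V → ℕ} (hv : f v = 0)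
    (hle : ∀ u w, G.Adj u w → f w ≤ f u + 1)
    (hdesc : ∀ w, w ≠ v → ∃ u, G.Adj w u ∧ f u + 1 = f w) (w : V) : G.dist v w = f w := by
  have hwalk : ∀ n w, f w = n → ∃ p : G.Walk v w, p.length = n := by
    intro n
    induction n with
    | zero =>
      intro w hw
      obtain rfl : w = v := by
        by_contra hne
        obtain ⟨u, -, hu⟩ := hdesc w hne
        omega
      exact ⟨.nil, rfl⟩
    | succ n ih =>
      intro w hw
      obtain ⟨u, hwu, hu⟩ := hdesc w (by rintro rfl; omega)
      obtain ⟨p, hp⟩ := ih u (by omega)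
      exact ⟨p.concat hwu.symm, by simp [hp]⟩
  have hlen : ∀ {u w} (p : G.Walk u w), f w ≤ f u + p.length := by
    intro u w p
    induction p with
    | nil => simp
    | cons h p ih => have := hle _ _ h; simp only [Walk.length_cons]; omega
  obtain ⟨p, hp⟩ := hwalk _ w rfl
  obtain ⟨q, hq⟩ := Reachable.exists_walk_length_eq_dist ⟨p⟩
  refine le_antisymm (hp ▸ dist_le p) ?_
  simpa [hv, hq] using hlen q

theorem ncard_mul_eq_ncard_mul {s t : Set V} (hs : s.Finite) (ht : t.Finite) {m n : ℕ}
    (hm : ∀ a ∈ s, (G.neighborSet a ∩ t).ncard = m)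
    (hn : ∀ b ∈ t, (G.neighborSet b ∩ s).ncard = n) : s.ncard * m = t.ncard * n := by
  classical
  rw [Set.ncard_eq_toFinset_card s hs, Set.ncard_eq_toFinset_card t ht]
  refine Finset.card_mul_eq_card_mul G.Adj (fun a ha => ?_) (fun b hb => ?_)
  · rw [← hm a (by simpa using ha), ← Set.ncard_coe_finset, Finset.coe_bipartiteAbove]
    congr 1; ext; simp [and_comm]
  · rw [← hn b (by simpa using hb), ← Set.ncard_coe_finset, Finset.coe_bipartiteBelow]
    congr 1; ext; simp [and_comm, G.adj_comm]

end SimpleGraph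

namespace List

variable {α : Type*}

theorem isChain_append_singleton {R : α → α → Prop} {l : List α} {z : α} :
    (l ++ [z]).IsChain R ↔ l.IsChain R ∧ ∀ c ∈ l.getLast?, R c z := by
  simp [isChain_append]

theorem IsChain.rel_of_append_cons {R : α → α → Prop} {l s : List α} {a c : α}
    (h : (l ++ a :: s).IsChain R) (hc : c ∈ l.getLast?) : R c a :=
  (isChain_append.1 h).2.2 c hc a (by simp)

theorem prefix_and_length_eq_succ_iff {l m : List α} :
    l <+: m ∧ m.length = l.length + 1 ↔ ∃ z, m = l ++ [z] := by
  constructor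
  · rintro ⟨⟨t, rfl⟩, hlen⟩
    obtain ⟨z, rfl⟩ := length_eq_one_iff.1 (by simpa using hlen)
    exact ⟨z, rfl⟩
  · rintro ⟨z, rfl⟩
    exact ⟨prefix_append _ _, by simp⟩

theorem length_eq_and_dropLast_eq_iff {l m : List α} (hl : l ≠ []) (hm : m ≠ []) :
    l.length = m.length ∧ l.dropLast = m.dropLast ↔
      ∃ p a b, l = p ++ [a] ∧ m = p ++ [b] := by
  constructor
  · rintro ⟨-, h⟩
    refine ⟨l.dropLast, l.getLast hl, m.getLast hm, (dropLast_concat_getLast hl).symm, ?_⟩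
    rw [h, dropLast_concat_getLast hm]
  · rintro ⟨p, a, b, rfl, rfl⟩
    simp

theorem ncard_setOf_mem {l : List α} (hl : l.Nodup) : {a | a ∈ l}.ncard = l.length := by
  classical
  rw [← coe_toFinset, Set.ncard_coe_finset, toFinset_card_of_nodup hl]

end List

namespace LinkedTriangle

section wordDist

variable {α : Type*} [DecidableEq α]

def wordDist : List α → List α → ℕ
  | [], m => m.length
  | _ :: s, [] => s.length + 1
  | a :: s, b :: t => if a = b then wordDist s t else s.length + t.length + 1

@[simp] theorem wordDist_nil_left (m : List α) : wordDist [] m = m.length := rfl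

@[simp] theorem wordDist_nil_right (l : List α) : wordDist l [] = l.length := by
  cases l <;> rfl

@[simp] theorem wordDist_cons_cons (a b : α) (s t : List α) :
    wordDist (a :: s) (b :: t) = if a = b then wordDist s t else s.length + t.length + 1 := rfl

@[simp] theorem wordDist_append_left (u s t : List α) :
    wordDist (u ++ s) (u ++ t) = wordDist s t := by
  induction u with
  | nil => rfl
  | cons a u ih => simpa using ih

@[simp] theorem wordDist_self (l : List α) : wordDist l l = 0 := by
  simpa using wordDist_append_left l [] []

theorem wordDist_pos {l m : List α} (h : l ≠ m) : 0 < wordDist l m := by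
  induction l generalizing m with
  | nil => cases m <;> simp_all
  | cons a s ih =>
    cases m with
    | nil => simp
    | cons b t =>
      by_cases hab : a = b
      · subst hab; simpa using ih (by simpa using h)
      · simp [hab]

theorem wordDist_append_cons_self (m : List α) (a : α) (s : List α) :
    wordDist (m ++ a :: s) m = s.length + 1 := by
  simpa using wordDist_append_left m (a :: s) []

theorem wordDist_append_cons_append_singleton (m : List α) (a z : α) (s : List α) :
    wordDist (m ++ a :: s) (m ++ [z]) = if a = z then s.length else s.length + 1 := by
  rw [wordDist_append_left, wordDist_cons_cons]
  split <;> simp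

theorem wordDist_append_singleton {l m : List α} (h : ∀ a s, l ≠ m ++ a :: s) (z : α) :
    wordDist l (m ++ [z]) = wordDist l m + 1 := by
  induction m generalizing l with
  | nil =>
    cases l with
    | nil => rfl
    | cons a s => exact absurd rfl (h a s)
  | cons b m ih =>
    cases l with
    | nil => simp
    | cons a l =>
      by_cases hab : a = b
      · subst hab
        simpa using ih fun c s hc => h c s (by simp [hc])
      · simp [hab]
        omega

theorem wordDist_append_singleton_le (l m : List α) (z : α) :
    wordDist l (m ++ [z]) ≤ wordDist l m + 1 ∧ wordDist l m ≤ wordDist l (m ++ [z]) + 1 := by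
  by_cases h : ∃ a s, l = m ++ a :: s
  · obtain ⟨a, s, rfl⟩ := h
    rw [wordDist_append_cons_append_singleton, wordDist_append_cons_self]
    split <;> omega
  · simp only [not_exists] at h
    rw [wordDist_append_singleton h]
    omega

theorem wordDist_append_singleton_le_succ (l m : List α) (a b : α) :
    wordDist l (m ++ [b]) ≤ wordDist l (m ++ [a]) + 1 := by
  by_cases h : ∃ c s, l = m ++ c :: s
  · obtain ⟨c, s, rfl⟩ := h
    simp only [wordDist_append_cons_append_singleton]
    split <;> split <;> omega
  · simp only [not_exists] at h
    rw [wordDist_append_singleton h, wordDist_append_singleton h]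
    omega

theorem length_le_length_add_wordDist (l m : List α) : m.length ≤ l.length + wordDist l m := by
  induction l generalizing m with
  | nil => simp
  | cons a s ih =>
    cases m with
    | nil => simp
    | cons b t =>
      have := ih t
      simp only [wordDist_cons_cons, List.length_cons]
      split <;> omega

end wordDist

theorem adj_iff {u w : LTVertex} : LTGraph.Adj u w ↔ u ≠ w ∧
    ((∃ z, w.1 = u.1 ++ [z]) ∨ (∃ z, u.1 = w.1 ++ [z]) ∨
      ∃ p a b, u.1 = p ++ [a] ∧ w.1 = p ++ [b]) := by
  simp only [LTGraph, List.prefix_and_length_eq_succ_iff,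
    List.length_eq_and_dropLast_eq_iff u.2.1 w.2.1, ne_eq]

/-- For `a ≠ b`, the third letter, as `0 + 1 + 2 = 0` in `Fin 3`. -/
def third (a b : Fin 3) : Fin 3 := -a - b

theorem eq_third_iff {a b z : Fin 3} (h : a ≠ b) : z = third a b ↔ z ≠ a ∧ z ≠ b := by
  revert a b z; decide

theorem ne_iff_eq_add_one_or_eq_add_two {y z : Fin 3} : z ≠ y ↔ z = y + 1 ∨ z = y + 2 := by
  revert y z; decide

def upperNbrs (r : List (Fin 3)) (y : Fin 3) : List (List (Fin 3)) :=
  match r.getLast? with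
  | none => [[y + 1], [y + 2]]
  | some c => [r, r ++ [third c y]]

def nbrWords (r : List (Fin 3)) (y : Fin 3) : List (List (Fin 3)) :=
  upperNbrs r y ++ [r ++ [y] ++ [y + 1], r ++ [y] ++ [y + 2]]

@[simp] theorem upperNbrs_nil (y : Fin 3) : upperNbrs [] y = [[y + 1], [y + 2]] := rfl

theorem upperNbrs_of_getLast?_eq_some {r : List (Fin 3)} {c : Fin 3} (hc : r.getLast? = some c)
    (y : Fin 3) : upperNbrs r y = [r, r ++ [third c y]] := by
  simp [upperNbrs, hc]

@[simp] theorem upperNbrs_append_singleton (q : List (Fin 3)) (c y : Fin 3) :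
    upperNbrs (q ++ [c]) y = [q ++ [c], q ++ [c, third c y]] := by
  simp [upperNbrs]

theorem nodup_nbrWords (r : List (Fin 3)) (y : Fin 3) : (nbrWords r y).Nodup := by
  rcases r.eq_nil_or_concat' with rfl | ⟨q, c, rfl⟩
  · revert y; decide
  · simp [nbrWords]

theorem isChain_of_mem_nbrWords {r l : List (Fin 3)} {y : Fin 3}
    (hw : (r ++ [y]).IsChain (· ≠ ·)) (hl : l ∈ nbrWords r y) :
    l ≠ [] ∧ l.IsChain (· ≠ ·) := by
  rcases r.eq_nil_or_concat' with rfl | ⟨q, c, rfl⟩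
  · simp only [nbrWords, upperNbrs_nil, List.cons_append, List.nil_append, List.mem_cons,
      List.not_mem_nil, or_false] at hl
    rcases hl with rfl | rfl | rfl | rfl <;> simp
  · have hcy : c ≠ y := by simp at hw; exact hw.2
    have hq : (q ++ [c]).IsChain (· ≠ ·) := hw.prefix ⟨[y], by simp⟩
    have ht := (eq_third_iff hcy).1 rfl
    simp only [nbrWords, upperNbrs_append_singleton, List.cons_append, List.nil_append,
      List.mem_cons, List.not_mem_nil, or_false] at hl
    rcases hl with rfl | rfl | rfl | rfl <;> simp_all [Ne.symm ht.1]

theorem mem_nbrWords_iff {r l : List (Fin 3)} {y : Fin 3} (hr : ∀ c ∈ r.getLast?, c ≠ y) :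
    l ∈ nbrWords r y ↔ (l = r ∧ r ≠ []) ∨
      (∃ b, b ≠ y ∧ (∀ c ∈ r.getLast?, c ≠ b) ∧ l = r ++ [b]) ∨
      ∃ z, z ≠ y ∧ l = r ++ [y, z] := by
  rcases r.eq_nil_or_concat' with rfl | ⟨q, c, rfl⟩
  · simp [nbrWords, ne_iff_eq_add_one_or_eq_add_two, or_and_right, exists_or, or_assoc]
  · have hthird := fun z => eq_third_iff (z := z) (hr c (by simp))
    have hsib :
        (∃ b, b ≠ y ∧ (∀ c' ∈ (q ++ [c]).getLast?, c' ≠ b) ∧ l = q ++ [c] ++ [b]) ↔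
          l = q ++ [c, third c y] := by
      constructor
      · rintro ⟨b, hby, hcb, rfl⟩
        simp [(hthird b).2 ⟨Ne.symm (hcb c (by simp)), hby⟩]
      · rintro rfl
        have ht := (hthird _).1 rfl
        exact ⟨third c y, ht.2, by simpa using Ne.symm ht.1, by simp⟩
    simp only [hsib]
    simp [nbrWords, ne_iff_eq_add_one_or_eq_add_two, or_and_right, exists_or]

theorem adj_iff_mem_nbrWords {w u : LTVertex} {r : List (Fin 3)} {y : Fin 3}
    (hw : w.1 = r ++ [y]) : LTGraph.Adj w u ↔ u.1 ∈ nbrWords r y := by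
  have hry : ∀ c ∈ r.getLast?, c ≠ y := (List.isChain_append_singleton.1 (hw ▸ w.2.2)).2
  rw [adj_iff, mem_nbrWords_iff hry]
  constructor
  · rintro ⟨hne, ⟨z, hz⟩ | ⟨z, hz⟩ | ⟨p, a, b, hp, hq⟩⟩
    · refine Or.inr (Or.inr ⟨z, ?_, by simp [hz, hw]⟩)
      exact ((List.isChain_append_singleton.1 (hz ▸ u.2.2)).2 y (by simp [hw])).symm
    · rw [hw] at hz
      obtain ⟨hr, -⟩ := List.append_singleton_inj.1 hz
      exact Or.inl ⟨hr.symm, hr ▸ u.2.1⟩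
    · rw [hw] at hp
      obtain ⟨rfl, rfl⟩ := List.append_singleton_inj.1 hp
      refine Or.inr (Or.inl ⟨b, ?_, (List.isChain_append_singleton.1 (hq ▸ u.2.2)).2, hq⟩)
      rintro rfl
      exact hne (Subtype.ext (hw.trans hq.symm))
  · rintro (⟨hu, -⟩ | ⟨b, hby, -, hu⟩ | ⟨z, -, hu⟩)
    · refine ⟨fun h => ?_, Or.inr (Or.inl ⟨y, by rw [hw, hu]⟩)⟩
      rw [← h, hw] at hu
      simp at hu
    · refine ⟨fun h => ?_, Or.inr (Or.inr ⟨r, y, b, hw, hu⟩)⟩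
      rw [← h, hw] at hu
      exact hby (List.append_singleton_inj.1 hu).2.symm
    · refine ⟨fun h => ?_, Or.inl ⟨z, by simp [hu, hw]⟩⟩
      rw [← h, hw] at hu
      simp at hu

theorem val_image_neighborSet {w : LTVertex} {r : List (Fin 3)} {y : Fin 3}
    (hw : w.1 = r ++ [y]) :
    (fun u : LTVertex => u.1) '' LTGraph.neighborSet w = {l | l ∈ nbrWords r y} := by
  ext l
  constructor
  · rintro ⟨u, hu, rfl⟩
    exact (adj_iff_mem_nbrWords hw).1 hu
  · intro hl
    exact ⟨⟨l, isChain_of_mem_nbrWords (hw ▸ w.2.2) hl⟩,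
      (adj_iff_mem_nbrWords hw).2 hl, rfl⟩

theorem exists_eq_append_singleton (w : LTVertex) : ∃ r y, w.1 = r ++ [y] :=
  ⟨_, _, (List.dropLast_concat_getLast w.2.1).symm⟩

theorem ncard_neighborSet (w : LTVertex) : (LTGraph.neighborSet w).ncard = 4 := by
  obtain ⟨r, y, hw⟩ := exists_eq_append_singleton w
  rw [← Set.ncard_image_of_injective (f := fun u : LTVertex => u.1) _ Subtype.val_injective,
    val_image_neighborSet hw, List.ncard_setOf_mem (nodup_nbrWords r y)]
  simp [nbrWords, upperNbrs]
  split <;> rfl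

theorem ncard_neighborSet_inter {w : LTVertex} {r : List (Fin 3)} {y : Fin 3}
    (hw : w.1 = r ++ [y]) (f : List (Fin 3) → ℕ) (k : ℕ) :
    (LTGraph.neighborSet w ∩ {u | f u.1 = k}).ncard = ((nbrWords r y).map f).count k := by
  rw [← Set.ncard_image_of_injective (f := fun u : LTVertex => u.1) _ Subtype.val_injective]
  rw [show {u : LTVertex | f u.1 = k} = (fun u : LTVertex => u.1) ⁻¹' {l | f l = k} from rfl,
    Set.image_inter_preimage, val_image_neighborSet hw,
    show {l | l ∈ nbrWords r y} ∩ {l | f l = k} =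
        {l | l ∈ (nbrWords r y).filter (f · = k)} by ext; simp,
    List.ncard_setOf_mem ((nodup_nbrWords r y).filter _), List.count_eq_countP, List.countP_map,
    List.countP_eq_length_filter]
  rfl

theorem perm_ite_eq_add_one_add_two {a y : Fin 3} (h : a ≠ y) (n : ℕ) :
    [if a = y + 1 then n else n + 1, if a = y + 2 then n else n + 1].Perm [n, n + 1] := by
  rcases ne_iff_eq_add_one_or_eq_add_two.1 h with rfl | rfl
  · simp
  · simpa using List.Perm.swap _ _ []

theorem map_wordDist_upperNbrs_of_eq_append {r : List (Fin 3)} {y : Fin 3}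
    (hry : ∀ c ∈ r.getLast?, c ≠ y) (t : List (Fin 3)) :
    (upperNbrs r y).map (wordDist (r ++ y :: t)) = [t.length + 1, t.length + 1] := by
  cases hc : r.getLast? with
  | none =>
    obtain rfl := List.getLast?_eq_none_iff.1 hc
    simp
  | some c =>
    have hty := ((eq_third_iff (hry c hc)).1 rfl).2
    simp [upperNbrs_of_getLast?_eq_some hc, wordDist_append_cons_self, Ne.symm hty]

theorem map_wordDist_upperNbrs_perm {l r : List (Fin 3)} {y : Fin 3}
    (hl : l ≠ [] ∧ l.IsChain (· ≠ ·)) (hry : ∀ c ∈ r.getLast?, c ≠ y)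
    (hne : l ≠ r ++ [y]) (hlow : ∀ x s, l ≠ r ++ [y] ++ x :: s) :
    ((upperNbrs r y).map (wordDist l)).Perm [wordDist l (r ++ [y]) - 1, wordDist l (r ++ [y])] := by
  by_cases hup : ∃ a s, l = r ++ a :: s
  · obtain ⟨a, s, rfl⟩ := hup
    have hay : a ≠ y := by
      rintro rfl
      cases s with
      | nil => exact hne rfl
      | cons x s => exact hlow x s (by simp)
    rw [wordDist_append_cons_append_singleton, if_neg hay, Nat.add_sub_cancel]
    cases hc : r.getLast? with
    | none =>
      obtain rfl := List.getLast?_eq_none_iff.1 hc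
      simpa using perm_ite_eq_add_one_add_two hay s.length
    | some c =>
      have hac : a = third c y :=
        (eq_third_iff (hry c hc)).2 ⟨(hl.2.rel_of_append_cons hc).symm, hay⟩
      simpa [upperNbrs_of_getLast?_eq_some hc, wordDist_append_cons_self,
        wordDist_append_cons_append_singleton, hac] using List.Perm.swap _ _ []
  · simp only [not_exists] at hup
    cases hc : r.getLast? with
    | none =>
      obtain rfl := List.getLast?_eq_none_iff.1 hc
      obtain ⟨a, s, rfl⟩ := List.exists_cons_of_ne_nil hl.1
      exact absurd (by simp) (hup a s)
    | some c =>
      simp [upperNbrs_of_getLast?_eq_some hc, wordDist_append_singleton hup]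

theorem map_wordDist_nbrWords_perm {v w : LTVertex} {r : List (Fin 3)} {y : Fin 3}
    (hw : w.1 = r ++ [y]) (hvw : v ≠ w) :
    ((nbrWords r y).map (wordDist v.1)).Perm
      [wordDist v.1 w.1 - 1, wordDist v.1 w.1, wordDist v.1 w.1 + 1, wordDist v.1 w.1 + 1] := by
  have hry : ∀ c ∈ r.getLast?, c ≠ y := (List.isChain_append_singleton.1 (hw ▸ w.2.2)).2
  rw [hw]
  simp only [nbrWords, List.map_append, List.map_cons, List.map_nil]
  by_cases hlow : ∃ x s, v.1 = r ++ [y] ++ x :: s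
  · obtain ⟨x, s, hv⟩ := hlow
    have hvc : (r ++ [y] ++ x :: s).IsChain (· ≠ ·) := hv ▸ v.2.2
    have hxy : y ≠ x := hvc.rel_of_append_cons (by simp)
    rw [hv, wordDist_append_cons_append_singleton, wordDist_append_cons_append_singleton,
      wordDist_append_cons_self, List.append_assoc, List.singleton_append,
      map_wordDist_upperNbrs_of_eq_append hry]
    simpa using List.perm_append_comm.trans
      ((perm_ite_eq_add_one_add_two hxy.symm s.length).append_right [s.length + 2, s.length + 2])
  · simp only [not_exists] at hlow
    have hne : v.1 ≠ r ++ [y] := fun h => hvw (Subtype.ext (h.trans hw.symm))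
    rw [wordDist_append_singleton hlow, wordDist_append_singleton hlow]
    exact (map_wordDist_upperNbrs_perm v.2 hry hne hlow).append_right _

theorem wordDist_le_of_adj {u w : LTVertex} (h : LTGraph.Adj u w) (l : List (Fin 3)) :
    wordDist l w.1 ≤ wordDist l u.1 + 1 := by
  obtain ⟨-, ⟨z, hz⟩ | ⟨z, hz⟩ | ⟨p, a, b, hp, hq⟩⟩ := adj_iff.1 h
  · rw [hz]; exact (wordDist_append_singleton_le l u.1 z).1
  · rw [hz]; exact (wordDist_append_singleton_le l w.1 z).2
  · rw [hp, hq]; exact wordDist_append_singleton_le_succ l p a b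

theorem exists_adj_wordDist_add_one {v w : LTVertex} (h : w ≠ v) :
    ∃ u, LTGraph.Adj w u ∧ wordDist v.1 u.1 + 1 = wordDist v.1 w.1 := by
  obtain ⟨r, y, hw⟩ := exists_eq_append_singleton w
  have hpos := wordDist_pos fun hvw => h (Subtype.ext hvw.symm)
  obtain ⟨l, hl, hlv⟩ := List.mem_map.1 <|
    (map_wordDist_nbrWords_perm hw h.symm).mem_iff.2 (List.mem_cons_self ..)
  exact ⟨⟨l, isChain_of_mem_nbrWords (hw ▸ w.2.2) hl⟩, (adj_iff_mem_nbrWords hw).2 hl, by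
    simp only; omega⟩

theorem dist_eq_wordDist (v w : LTVertex) : LTGraph.dist v w = wordDist v.1 w.1 :=
  LTGraph.dist_eq_of_lipschitz_of_descent (wordDist_self v.1)
    (fun _ _ h => wordDist_le_of_adj h v.1) (fun _ h => exists_adj_wordDist_add_one h) w

theorem ncard_neighborSet_inter_dist {v w : LTVertex} (hvw : v ≠ w) (k : ℕ) :
    (LTGraph.neighborSet w ∩ {u | LTGraph.dist v u = k}).ncard =
      [LTGraph.dist v w - 1, LTGraph.dist v w, LTGraph.dist v w + 1,
        LTGraph.dist v w + 1].count k := by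
  obtain ⟨r, y, hw⟩ := exists_eq_append_singleton w
  simp only [dist_eq_wordDist]
  rw [ncard_neighborSet_inter hw, (map_wordDist_nbrWords_perm hw hvw).count_eq]

theorem ncard_neighborSet_inter_dist_succ {v w : LTVertex} {i : ℕ} (hi : 1 ≤ i)
    (h : LTGraph.dist v w = i) :
    (LTGraph.neighborSet w ∩ {u | LTGraph.dist v u = i + 1}).ncard = 2 := by
  have hvw : v ≠ w := by rintro rfl; simp at h; omega
  obtain ⟨n, rfl⟩ := Nat.exists_eq_add_of_le' hi
  simp [ncard_neighborSet_inter_dist hvw, h, List.count_cons]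
  omega

theorem ncard_neighborSet_inter_dist_pred {v w : LTVertex} {i : ℕ} (hi : 1 ≤ i)
    (h : LTGraph.dist v w = i) :
    (LTGraph.neighborSet w ∩ {u | LTGraph.dist v u = i - 1}).ncard = 1 := by
  have hvw : v ≠ w := by rintro rfl; simp at h; omega
  obtain ⟨n, rfl⟩ := Nat.exists_eq_add_of_le' hi
  simp [ncard_neighborSet_inter_dist hvw, h, List.count_cons]
  omega

theorem finite_setOf_dist (v : LTVertex) (i : ℕ) : {w | LTGraph.dist v w = i}.Finite := by
  refine ((List.finite_length_le (Fin 3) (v.1.length + i)).preimage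
    Subtype.val_injective.injOn).subset fun w hw => ?_
  have hw : wordDist v.1 w.1 = i := (dist_eq_wordDist v w).symm.trans hw
  have := length_le_length_add_wordDist v.1 w.1
  show w.1.length ≤ v.1.length + i
  omega

theorem ncard_setOf_dist (v : LTVertex) {i : ℕ} (hi : 1 ≤ i) :
    {w | LTGraph.dist v w = i}.ncard = 2 ^ (i + 1) := by
  induction i, hi using Nat.le_induction with
  | base =>
    have : {w | LTGraph.dist v w = 1} = LTGraph.neighborSet v := by
      ext; exact SimpleGraph.dist_eq_one_iff_adj
    rw [this, ncard_neighborSet]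
    rfl
  | succ i hi ih =>
    have := LTGraph.ncard_mul_eq_ncard_mul (finite_setOf_dist v i) (finite_setOf_dist v (i + 1))
      (fun _ hu => ncard_neighborSet_inter_dist_succ hi hu)
      (fun _ hw => ncard_neighborSet_inter_dist_pred (by omega) hw)
    rw [pow_succ, ← ih, this, mul_one]

end LinkedTriangle

/-- The linked-triangle graph is distance-regular with intersection array
`b₀ = 4`, `b_i = 2` and `c_i = 1` for `i ≥ 1`, and its spheres satisfy
`|Γ_i(v₀)| = 2^(i+1)` for `i ≥ 1`. -/
theorem linkedTriangle_distance_regular :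
    (∀ v : LTVertex, (LTGraph.neighborSet v).ncard = 4) ∧
    (∀ (v w : LTVertex) (i : ℕ), 1 ≤ i → LTGraph.dist v w = i →
      (LTGraph.neighborSet w ∩ {u : LTVertex | LTGraph.dist v u = i + 1}).ncard = 2 ∧
      (LTGraph.neighborSet w ∩ {u : LTVertex | LTGraph.dist v u = i - 1}).ncard = 1) ∧
    (∀ (v₀ : LTVertex) (i : ℕ), 1 ≤ i →
      {w : LTVertex | LTGraph.dist v₀ w = i}.ncard = 2 ^ (i + 1)) := by
  open LinkedTriangle in
  exact ⟨ncard_neighborSet,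
    fun _ _ _ hi h =>
      ⟨ncard_neighborSet_inter_dist_succ hi h, ncard_neighborSet_inter_dist_pred hi h⟩,
    fun v₀ _ hi => ncard_setOf_dist v₀ hi⟩
end
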